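/- Let n ≥ 4 be an even integer, k ≥ 2, let 1 ≤ i < j ≤ k, let u, v ∈ {1,…,n}, and let (u_1,…,u_k) ∈ {1,…,n}^k with u_i = u and u_j = v. Then no hyperplane strictly separates q_{ij}^{uv} from P(u_1,…,u_k): there exist no a ∈ ℝ^{2k} and b ∈ ℝ with ⟨a, q_{ij}^{uv}⟩ > b and ⟨a, p⟩ < b for all p ∈ P(u_1,…,u_k). -/
import Mathlib


open scoped RealInnerProductSpace
open Real

/-- The scaffolding point `p_{iu}` in `ℝ^{2k}`: its `i`-th coordinate pair is
`(cos((u−1)·2π/n), sin((u−1)·2π/n))` and its other coordinates are `0`. -/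
noncomputable def scafPt (n k : ℕ) (i : Fin k) (u : ℕ) :
    EuclideanSpace ℝ (Fin (2 * k)) :=
  (WithLp.equiv 2 (Fin (2 * k) → ℝ)).symm fun idx =>
    if (idx : ℕ) = 2 * (i : ℕ) then Real.cos (((u : ℝ) - 1) * (2 * Real.pi) / n)
    else if (idx : ℕ) = 2 * (i : ℕ) + 1 then Real.sin (((u : ℝ) - 1) * (2 * Real.pi) / n)
    else 0

/-- The scaffolding point set `P = {p_{iu} : 1 ≤ i ≤ k, 1 ≤ u ≤ n}`. -/
noncomputable def scafSet (n k : ℕ) : Set (EuclideanSpace ℝ (Fin (2 * k))) :=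
  {x | ∃ i : Fin k, ∃ u ∈ Finset.Icc 1 n, x = scafPt n k i u}

/-- The antipodal partner `u' ∈ {1,…,n}` of `u ∈ {1,…,n}`: the unique element of
`{1,…,n}` congruent to `u + n/2` modulo `n`. -/
def antip (n u : ℕ) : ℕ := (u - 1 + n / 2) % n + 1

/-- The almost antipodal partner `ū ∈ {1,…,n}` of `u ∈ {1,…,n}`: the unique element of
`{1,…,n}` congruent to `u + n/2 + 1` modulo `n`. -/
def almostAntip (n u : ℕ) : ℕ := (u - 1 + n / 2 + 1) % n + 1

/-- The half of the scaffolding set selected by a tuple `(u_1,…,u_k) ∈ {1,…,n}^k`: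
`P(u_1,…,u_k) = {p_{it} : 1 ≤ i ≤ k, t ∈ {1,…,n}, t ≡ u_i − s (mod n)` for some
`s ∈ {0,…,n/2−1}}`. -/
noncomputable def scafHalf (n k : ℕ) (U : Fin k → ℕ) :
    Set (EuclideanSpace ℝ (Fin (2 * k))) :=
  {x | ∃ i : Fin k, ∃ t ∈ Finset.Icc 1 n,
    (∃ s < n / 2, t + s ≡ U i [MOD n]) ∧ x = scafPt n k i t}

/-- The affine hyperplane `{x : ⟪a, x⟫ = b}`. -/
def hyp {k : ℕ} (a : EuclideanSpace ℝ (Fin (2 * k))) (b : ℝ) :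
    Set (EuclideanSpace ℝ (Fin (2 * k))) := {x | ⟪a, x⟫ = b}

/-- The constraint point `q_{ij}^{uv}`: the centroid of `p_{iu}, p_{iū}, p_{jv}, p_{jv̄}`. -/
noncomputable def constrPt (n k : ℕ) (i j : Fin k) (u v : ℕ) :
    EuclideanSpace ℝ (Fin (2 * k)) :=
  (1 / 4 : ℝ) • (scafPt n k i u + scafPt n k i (almostAntip n u)
    + scafPt n k j v + scafPt n k j (almostAntip n v))

lemma mem_scafHalf_self (n k : ℕ) (hn : 4 ≤ n) (U : Fin k → ℕ) (i : Fin k)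
    (hu : U i ∈ Finset.Icc 1 n) : scafPt n k i (U i) ∈ scafHalf n k U := by
  refine ⟨i, U i, hu, ⟨0, by omega, by simp [Nat.ModEq]⟩, rfl⟩

lemma mem_scafHalf_almostAntip (n k : ℕ) (hn : 4 ≤ n) (hneven : Even n)
    (U : Fin k → ℕ) (i : Fin k) (hu : U i ∈ Finset.Icc 1 n) :
    scafPt n k i (almostAntip n (U i)) ∈ scafHalf n k U := by
  simp only [Finset.mem_Icc] at hu
  have hn0 : 0 < n := by omega
  have hnn : n / 2 + n / 2 = n := by
    obtain ⟨m, hm⟩ := hneven; omega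
  refine ⟨i, almostAntip n (U i), ?_, ⟨n / 2 - 1, by omega, ?_⟩, rfl⟩
  · simp only [Finset.mem_Icc, almostAntip]
    have := Nat.mod_lt (U i - 1 + n / 2 + 1) hn0
    omega
  · unfold almostAntip
    have h1 : U i - 1 + n / 2 + 1 = U i + n / 2 := by omega
    rw [h1]
    have h2 : (U i + n / 2) % n ≡ U i + n / 2 [MOD n] := Nat.mod_modEq _ _
    calc (U i + n / 2) % n + 1 + (n / 2 - 1)
        ≡ (U i + n / 2) + 1 + (n / 2 - 1) [MOD n] :=
          Nat.ModEq.add_right _ (Nat.ModEq.add_right _ h2)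
      _ = U i + n := by omega
      _ ≡ U i [MOD n] := by simpa using (Nat.add_modEq_right (n := n) (a := U i))

/-- If `u_i = u` and `u_j = v`, then no hyperplane strictly separates the constraint point
`q_{ij}^{uv}` from `P(u_1,…,u_k)`. -/
theorem no_strict_separation (n k : ℕ) (hn : 4 ≤ n) (hneven : Even n) (hk : 2 ≤ k)
    (i j : Fin k) (hij : i < j) (u v : ℕ)
    (hu : u ∈ Finset.Icc 1 n) (hv : v ∈ Finset.Icc 1 n)
    (U : Fin k → ℕ) (hU : ∀ m, U m ∈ Finset.Icc 1 n)
    (hUi : U i = u) (hUj : U j = v) :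
    ¬∃ (a : EuclideanSpace ℝ (Fin (2 * k))) (b : ℝ),
        ⟪a, constrPt n k i j u v⟫ > b ∧ ∀ p ∈ scafHalf n k U, ⟪a, p⟫ < b := by
  rintro ⟨a, b, hgt, hlt⟩
  have h1 : ⟪a, scafPt n k i u⟫ < b := hlt _ (hUi ▸ mem_scafHalf_self n k hn U i (hUi ▸ hu))
  have h2 : ⟪a, scafPt n k i (almostAntip n u)⟫ < b :=
    hlt _ (hUi ▸ mem_scafHalf_almostAntip n k hn hneven U i (hUi ▸ hu))
  have h3 : ⟪a, scafPt n k j v⟫ < b := hlt _ (hUj ▸ mem_scafHalf_self n k hn U j (hUj ▸ hv))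
  have h4 : ⟪a, scafPt n k j (almostAntip n v)⟫ < b :=
    hlt _ (hUj ▸ mem_scafHalf_almostAntip n k hn hneven U j (hUj ▸ hv))
  have hq : ⟪a, constrPt n k i j u v⟫
      = (1 / 4 : ℝ) * (⟪a, scafPt n k i u⟫ + ⟪a, scafPt n k i (almostAntip n u)⟫
        + ⟪a, scafPt n k j v⟫ + ⟪a, scafPt n k j (almostAntip n v)⟫) := by
    simp [constrPt, inner_smul_right, inner_add_right]; ring
  rw [hq] at hgt
  linarith
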